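/- arXiv:0806.1879 — 2 statements merged into one kernel-verified Lean document; each statement's English description precedes it below -/
import Mathlib

section
/- Filling each column of a skew diagram λ/μ with the entries 1, 2, …, h (where h is the height of that column) from top to bottom produces a Littlewood-Richardson tableau, and its content is the decreasing rearrangement of the column heights of λ/μ. -/
open YoungDiagram
open scoped Classical

namespace LRSkew

/-- The cells of the skew diagram `lam/mu`. -/
def skewCells (lam mu : YoungDiagram) : Finset (ℕ × ℕ) := lam.cells \ mu.cells

/-- A semistandard filling of the skew shape `lam/mu`: entries are positive exactly on the
cells of the shape, rows are weakly increasing and columns are strictly increasing. -/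
def IsSSYT (lam mu : YoungDiagram) (T : ℕ × ℕ → ℕ) : Prop :=
  (∀ p, p ∈ skewCells lam mu ↔ T p ≠ 0) ∧
  (∀ i j1 j2, (i, j1) ∈ skewCells lam mu → (i, j2) ∈ skewCells lam mu → j1 ≤ j2 →
    T (i, j1) ≤ T (i, j2)) ∧
  (∀ i1 i2 j, (i1, j) ∈ skewCells lam mu → (i2, j) ∈ skewCells lam mu → i1 < i2 →
    T (i1, j) < T (i2, j))

/-- The number of entries equal to `k` among the cells read (in the reverse reading word:
right to left along rows, top row first) up to position `(i,j)`. -/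
def prefixCount (lam mu : YoungDiagram) (T : ℕ × ℕ → ℕ) (i j k : ℕ) : ℕ :=
  ((skewCells lam mu).filter fun p => (p.1 < i ∨ (p.1 = i ∧ j ≤ p.2)) ∧ T p = k).card

/-- The reverse reading word of the filling is a lattice word. -/
def IsLattice (lam mu : YoungDiagram) (T : ℕ × ℕ → ℕ) : Prop :=
  ∀ i j k, prefixCount lam mu T i j (k + 2) ≤ prefixCount lam mu T i j (k + 1)

/-- The number of entries of the filling equal to `k`. -/
def content (lam mu : YoungDiagram) (T : ℕ × ℕ → ℕ) (k : ℕ) : ℕ :=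
  ((skewCells lam mu).filter fun p => T p = k).card

/-- A Littlewood–Richardson tableau of shape `lam/mu` and content `nu`. -/
def IsLR (lam mu nu : YoungDiagram) (T : ℕ × ℕ → ℕ) : Prop :=
  IsSSYT lam mu T ∧ IsLattice lam mu T ∧ ∀ i, content lam mu T (i + 1) = nu.rowLen i

/-- The Littlewood–Richardson coefficient `c(lam; mu, nu)`. -/
noncomputable def lrCoeff (lam mu nu : YoungDiagram) : ℕ :=
  if mu ≤ lam then {T : ℕ × ℕ → ℕ | IsLR lam mu nu T}.ncard else 0

/-- Equality of the skew Schur functions `s_{lam/mu} = s_{alp/bet}`, expressed through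
their expansions into Schur functions. -/
def SchurEq (lam mu alp bet : YoungDiagram) : Prop :=
  ∀ nu : YoungDiagram, lrCoeff lam mu nu = lrCoeff alp bet nu

/-- The rectangular Young diagram `(k^l)` with `l` rows of length `k`. -/
def rect (k l : ℕ) : YoungDiagram :=
  ⟨Finset.range l ×ˢ Finset.range k, by
    intro a b hba ha
    simp only [Finset.coe_product, Set.mem_prod, Finset.mem_coe, Finset.mem_range] at ha ⊢
    exact ⟨lt_of_le_of_lt hba.1 ha.1, lt_of_le_of_lt hba.2 ha.2⟩⟩

/-- The complement of `nu` in the rectangle `(k^l)`, rotated by 180 degrees so that it is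
again a partition: its parts are `(k - nu_l, …, k - nu_1)`. -/
def complRect (k l : ℕ) (nu : YoungDiagram) : YoungDiagram :=
  ⟨(rect k l).cells.filter fun p => (l - 1 - p.1, k - 1 - p.2) ∉ nu, by
    intro a b hba ha
    simp only [Finset.coe_filter, Set.mem_setOf_eq, mem_cells] at ha ⊢
    refine ⟨(rect k l).isLowerSet hba ha.1, fun hmem => ha.2 ?_⟩
    exact nu.isLowerSet
      (Prod.mk_le_mk.mpr ⟨Nat.sub_le_sub_left hba.1 _, Nat.sub_le_sub_left hba.2 _⟩) hmem⟩

/-- The staircase partition `(n, n-1, …, 2, 1)`. -/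
def staircase (n : ℕ) : YoungDiagram :=
  ⟨(Finset.range n ×ˢ Finset.range n).filter fun p => p.1 + p.2 < n, by
    intro a b hba ha
    simp only [Finset.coe_filter, Set.mem_setOf_eq, Finset.mem_product, Finset.mem_range] at ha ⊢
    exact ⟨⟨lt_of_le_of_lt hba.1 ha.1.1, lt_of_le_of_lt hba.2 ha.1.2⟩,
      lt_of_le_of_lt (Nat.add_le_add hba.1 hba.2) ha.2⟩⟩

/-- A basic skew diagram: no empty rows and no empty columns. -/
def IsBasic (lam mu : YoungDiagram) : Prop :=
  (∀ i, i < lam.colLen 0 → mu.rowLen i < lam.rowLen i) ∧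
  (∀ j, j < lam.rowLen 0 → mu.colLen j < lam.colLen j)

/-- A (basic) skew diagram is connected iff consecutive rows share a column. -/
def IsConnectedSkew (lam mu : YoungDiagram) : Prop :=
  ∀ i, i + 1 < lam.colLen 0 → mu.rowLen i < lam.rowLen (i + 1)

/-- The number of distinct (positive) part sizes of a partition. -/
def dp (lam : YoungDiagram) : ℕ :=
  ((Finset.range (lam.colLen 0)).image fun i => lam.rowLen i).card

/-- A partition is a rectangle: all its parts are equal. -/
def IsRect (mu : YoungDiagram) : Prop :=
  ∀ i, i < mu.colLen 0 → mu.rowLen i = mu.rowLen 0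

/-- Cells of a skew diagram in the same connected component: the reflexive–transitive
closure of sharing a row or a column. -/
def SameComp (s : Finset (ℕ × ℕ)) : ℕ × ℕ → ℕ × ℕ → Prop :=
  Relation.ReflTransGen fun a b => a ∈ s ∧ b ∈ s ∧ (a.1 = b.1 ∨ a.2 = b.2)

/-- Two finite sets of boxes agree up to translation or 180°-rotation of each connected
component independently. -/
def UpToTransRot (s t : Finset (ℕ × ℕ)) : Prop :=
  ∃ f : ℕ × ℕ → ℕ × ℕ, Set.BijOn f ↑s ↑t ∧
    ∀ p ∈ s, ∀ q ∈ s, SameComp s p q →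
      (((f q).1 : ℤ) - (f p).1 = (q.1 : ℤ) - p.1 ∧ ((f q).2 : ℤ) - (f p).2 = (q.2 : ℤ) - p.2) ∨
      (((f q).1 : ℤ) - (f p).1 = (p.1 : ℤ) - q.1 ∧ ((f q).2 : ℤ) - (f p).2 = (p.2 : ℤ) - q.2)


/-
The entry `k + 1` of the column filling sits in row `mu.colLen j + k` of column `j`, so each
column contributes at most one entry of each value. Hence every entry `k + 2` lies directly
below an entry `k + 1`, which the reverse reading word visits earlier; this injection gives the
lattice property. The entries `k + 1` are in bijection with the columns of height at least
`k + 1`, which gives the content.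
-/

lemma mem_skewCells_iff {lam mu : YoungDiagram} {p : ℕ × ℕ} :
    p ∈ skewCells lam mu ↔ mu.colLen p.2 ≤ p.1 ∧ p.1 < lam.colLen p.2 := by
  obtain ⟨i, j⟩ := p
  simp [skewCells, mem_iff_lt_colLen, and_comm]

def columnFilling (lam mu : YoungDiagram) (p : ℕ × ℕ) : ℕ :=
  if p ∈ skewCells lam mu then p.1 - mu.colLen p.2 + 1 else 0

section ColumnFilling

variable {lam mu : YoungDiagram}

lemma columnFilling_of_mem {p : ℕ × ℕ} (hp : p ∈ skewCells lam mu) :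
    columnFilling lam mu p = p.1 - mu.colLen p.2 + 1 :=
  if_pos hp

lemma columnFilling_eq_succ_iff {p : ℕ × ℕ} {k : ℕ} :
    columnFilling lam mu p = k + 1 ↔ p.1 = mu.colLen p.2 + k ∧ p.1 < lam.colLen p.2 := by
  unfold columnFilling
  split_ifs with hp <;> rw [mem_skewCells_iff] at hp <;> grind

lemma isSSYT_columnFilling : IsSSYT lam mu (columnFilling lam mu) := by
  refine ⟨fun p => ?_, fun i j1 j2 h1 h2 hj => ?_, fun i1 i2 j h1 h2 hi => ?_⟩
  · unfold columnFilling
    split_ifs with hp <;> simp [hp]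
  · have hmu := mu.colLen_anti j1 j2 hj
    rw [columnFilling_of_mem h1, columnFilling_of_mem h2]
    dsimp only
    omega
  · have hi1 : mu.colLen j ≤ i1 := (mem_skewCells_iff.mp h1).1
    rw [columnFilling_of_mem h1, columnFilling_of_mem h2]
    dsimp only
    omega

lemma isLattice_columnFilling : IsLattice lam mu (columnFilling lam mu) := by
  intro i j k
  refine Finset.card_le_card_of_injOn (fun p => (p.1 - 1, p.2)) (fun ⟨r, c⟩ hp => ?_)
    (fun ⟨r, c⟩ hp ⟨r', c'⟩ hq hpq => ?_)
  · simp only [Finset.coe_filter, Set.mem_ofPred_eq, mem_skewCells_iff,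
      columnFilling_eq_succ_iff] at hp ⊢
    omega
  · simp only [Finset.coe_filter, Set.mem_ofPred_eq, columnFilling_eq_succ_iff,
      Prod.mk.injEq] at hp hq hpq ⊢
    omega

lemma content_columnFilling (k : ℕ) :
    content lam mu (columnFilling lam mu) (k + 1) =
      {j : ℕ | k + 1 ≤ lam.colLen j - mu.colLen j}.ncard := by
  have hentries : (((skewCells lam mu).filter fun p => columnFilling lam mu p = k + 1) :
      Set (ℕ × ℕ)) =
      (fun j => (mu.colLen j + k, j)) '' {j : ℕ | k + 1 ≤ lam.colLen j - mu.colLen j} := by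
    ext ⟨i, j⟩
    simp only [Finset.coe_filter, Set.mem_ofPred_eq, Set.mem_image, Prod.mk.injEq,
      mem_skewCells_iff, columnFilling_eq_succ_iff]
    constructor
    · rintro ⟨-, hi, hlt⟩
      exact ⟨j, by omega, hi.symm, rfl⟩
    · rintro ⟨j, hj, rfl, rfl⟩
      omega
  rw [content, ← Set.ncard_coe_finset, hentries,
    Set.ncard_image_of_injective _ fun _ _ h => congrArg Prod.snd h]

end ColumnFilling

theorem column_filling_isLR_general (lam mu : YoungDiagram) :
    IsSSYT lam mu (fun p => if p ∈ skewCells lam mu then p.1 - mu.colLen p.2 + 1 else 0) ∧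
    IsLattice lam mu (fun p => if p ∈ skewCells lam mu then p.1 - mu.colLen p.2 + 1 else 0) ∧
    ∀ k : ℕ,
      content lam mu (fun p => if p ∈ skewCells lam mu then p.1 - mu.colLen p.2 + 1 else 0)
          (k + 1) =
        {j : ℕ | k + 1 ≤ lam.colLen j - mu.colLen j}.ncard :=
  ⟨isSSYT_columnFilling, isLattice_columnFilling, content_columnFilling⟩

/-- filling every column of `lam/mu` with `1, 2, …, h` from top to bottom gives
an LR filling whose content is the decreasing rearrangement of the column heights. -/
theorem column_filling_isLR (lam mu : YoungDiagram) (hmu : mu ≤ lam) :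
    IsSSYT lam mu (fun p => if p ∈ skewCells lam mu then p.1 - mu.colLen p.2 + 1 else 0) ∧
    IsLattice lam mu (fun p => if p ∈ skewCells lam mu then p.1 - mu.colLen p.2 + 1 else 0) ∧
    ∀ k : ℕ,
      content lam mu (fun p => if p ∈ skewCells lam mu then p.1 - mu.colLen p.2 + 1 else 0)
          (k + 1) =
        {j : ℕ | k + 1 ≤ lam.colLen j - mu.colLen j}.ncard :=
  column_filling_isLR_general lam mu

end LRSkew
end

section
/- If λ/μ and α/β are basic skew diagrams with equal skew Schur functions s_{λ/μ} = s_{α/β}, and λ̂/μ, α̂/β denote the skew diagrams obtained by removing the top i boxes from every column of λ/μ and α/β respectively, then s_{λ̂/μ} = s_{α̂/β}. Similarly, removing the leftmost i boxes from every row of both diagrams preserves equality of the skew Schur functions. -/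
/-!
Both operations are iterates of a single step, and each single step is a bijection between
Littlewood–Richardson tableaux. The shape `(shortenCols 1 λ)/μ` is `λ/μ` with the top cell of
every column removed and moved up one row. An LR tableau of `λ/μ` whose content has first part
`C`, the number of columns, carries its `1`s exactly on the column tops; deleting them and
lowering the remaining entries by one gives `c(shortenCols 1 λ; μ, ν) = c(λ; μ, (C, ν))`.
The shape `(shortenRows 1 λ)/μ` is `λ/μ` with the last cell of every row removed. If the content
has as many parts as there are nonempty rows, `R`, the lattice condition forces the end of the
nonempty row of rank `r` to carry `r + 1`; deleting these entries gives
`c(shortenRows 1 λ; μ, ν) = c(λ; μ, ν + (1^R))`.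
Finally `C` and `R` are the largest first part and the largest length of a partition `ν` with
`c(λ; μ, ν) ≠ 0`, so two skew shapes with equal skew Schur functions share them, and the
identities transfer the equality to the shortened shapes.
-/

open YoungDiagram
open scoped Classical

namespace LRSkew

section Diagrams

variable {lam mu : YoungDiagram} {p : ℕ × ℕ}

lemma mem_skewCells : p ∈ skewCells lam mu ↔ p ∈ lam ∧ p ∉ mu := by
  simp [skewCells]

lemma mem_skewCells_iff_colLen :
    p ∈ skewCells lam mu ↔ mu.colLen p.2 ≤ p.1 ∧ p.1 < lam.colLen p.2 := by
  rw [mem_skewCells, ← Prod.mk.eta (p := p), mem_iff_lt_colLen, mem_iff_lt_colLen, not_lt,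
    and_comm]

lemma mem_skewCells_iff_rowLen :
    p ∈ skewCells lam mu ↔ mu.rowLen p.1 ≤ p.2 ∧ p.2 < lam.rowLen p.1 := by
  rw [mem_skewCells, ← Prod.mk.eta (p := p), mem_iff_lt_rowLen, mem_iff_lt_rowLen, not_lt,
    and_comm]

lemma skewCells_mono {lam' : YoungDiagram} (h : lam' ≤ lam) :
    skewCells lam' mu ⊆ skewCells lam mu :=
  Finset.sdiff_subset_sdiff (cells_subset_iff.mpr h) subset_rfl

lemma ext_of_colLen_eq {Y Z : YoungDiagram} (h : ∀ j, Y.colLen j = Z.colLen j) : Y = Z :=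
  SetLike.ext fun p => by rw [← Prod.mk.eta (p := p), mem_iff_lt_colLen, mem_iff_lt_colLen, h]

lemma ext_of_rowLen_eq {Y Z : YoungDiagram} (h : ∀ i, Y.rowLen i = Z.rowLen i) : Y = Z :=
  SetLike.ext fun p => by rw [← Prod.mk.eta (p := p), mem_iff_lt_rowLen, mem_iff_lt_rowLen, h]

lemma rowLen_eq_zero_of_colLen_le {nu : YoungDiagram} {k : ℕ} (h : nu.colLen 0 ≤ k) :
    nu.rowLen k = 0 := by
  by_contra hk
  have := mem_iff_lt_colLen.mp (mem_iff_lt_rowLen.mpr (Nat.pos_of_ne_zero hk))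
  omega

def shortenCols (t : ℕ) (lam : YoungDiagram) : YoungDiagram where
  cells := lam.cells.filter fun p => (p.1 + t, p.2) ∈ lam
  isLowerSet a b hba ha := by
    simp only [Finset.mem_coe, Finset.mem_filter, mem_cells] at ha ⊢
    exact ⟨lam.isLowerSet hba ha.1, lam.up_left_mem (by gcongr; exact hba.1) hba.2 ha.2⟩

def shortenRows (t : ℕ) (lam : YoungDiagram) : YoungDiagram where
  cells := lam.cells.filter fun p => (p.1, p.2 + t) ∈ lam
  isLowerSet a b hba ha := by
    simp only [Finset.mem_coe, Finset.mem_filter, mem_cells] at ha ⊢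
    exact ⟨lam.isLowerSet hba ha.1, lam.up_left_mem hba.1 (by gcongr; exact hba.2) ha.2⟩

variable {t : ℕ}

lemma mem_shortenCols : p ∈ shortenCols t lam ↔ (p.1 + t, p.2) ∈ lam := by
  rw [← mem_cells, shortenCols, Finset.mem_filter, mem_cells, and_iff_right_iff_imp]
  exact lam.up_left_mem (Nat.le_add_right _ _) le_rfl

lemma mem_shortenRows : p ∈ shortenRows t lam ↔ (p.1, p.2 + t) ∈ lam := by
  rw [← mem_cells, shortenRows, Finset.mem_filter, mem_cells, and_iff_right_iff_imp]
  exact lam.up_left_mem le_rfl (Nat.le_add_right _ _)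

lemma colLen_shortenCols (j : ℕ) : (shortenCols t lam).colLen j = lam.colLen j - t :=
  eq_of_forall_lt_iff fun r => by
    rw [← mem_iff_lt_colLen, mem_shortenCols, mem_iff_lt_colLen]
    dsimp only
    omega

lemma rowLen_shortenRows (i : ℕ) : (shortenRows t lam).rowLen i = lam.rowLen i - t :=
  eq_of_forall_lt_iff fun j => by
    rw [← mem_iff_lt_rowLen, mem_shortenRows, mem_iff_lt_rowLen]
    dsimp only
    omega

lemma eq_shortenCols {Y : YoungDiagram} (h : ∀ j, Y.colLen j = lam.colLen j - t) :
    Y = shortenCols t lam :=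
  ext_of_colLen_eq fun j => by rw [h, colLen_shortenCols]

lemma eq_shortenRows {Y : YoungDiagram} (h : ∀ i, Y.rowLen i = lam.rowLen i - t) :
    Y = shortenRows t lam :=
  ext_of_rowLen_eq fun i => by rw [h, rowLen_shortenRows]

lemma shortenCols_succ : shortenCols (t + 1) lam = shortenCols 1 (shortenCols t lam) :=
  eq_shortenCols fun j => by simp only [colLen_shortenCols]; omega

lemma shortenRows_succ : shortenRows (t + 1) lam = shortenRows 1 (shortenRows t lam) :=
  eq_shortenRows fun i => by simp only [rowLen_shortenRows]; omega

lemma shortenCols_zero : shortenCols 0 lam = lam :=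
  (eq_shortenCols fun _ => rfl).symm

lemma shortenRows_zero : shortenRows 0 lam = lam :=
  (eq_shortenRows fun _ => rfl).symm

lemma shortenCols_le : shortenCols t lam ≤ lam := fun _ hp =>
  lam.up_left_mem (Nat.le_add_right _ _) le_rfl (mem_shortenCols.mp hp)

lemma shortenRows_le : shortenRows t lam ≤ lam := fun _ hp =>
  lam.up_left_mem le_rfl (Nat.le_add_right _ _) (mem_shortenRows.mp hp)

def ofRowLen (f : ℕ → ℕ) (hf : Antitone f) (n : ℕ) : YoungDiagram where
  cells := (Finset.range n ×ˢ Finset.range (f 0)).filter fun p => p.2 < f p.1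
  isLowerSet a b hba ha := by
    simp only [Finset.mem_coe, Finset.mem_filter, Finset.mem_product, Finset.mem_range] at ha ⊢
    have := hba.1
    have := hba.2
    have := hf hba.1
    have := hf (Nat.zero_le a.1)
    exact ⟨⟨by omega, by omega⟩, by omega⟩

lemma rowLen_ofRowLen {f : ℕ → ℕ} (hf : Antitone f) {n : ℕ} (hn : ∀ k, n ≤ k → f k = 0)
    (k : ℕ) : (ofRowLen f hf n).rowLen k = f k :=
  eq_of_forall_lt_iff fun j => by
    rw [← mem_iff_lt_rowLen, ← mem_cells, ofRowLen, Finset.mem_filter, Finset.mem_product,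
      Finset.mem_range, Finset.mem_range]
    have := hf (Nat.zero_le k)
    dsimp only
    by_cases hk : k < n
    · omega
    · simp [hk, hn k (by omega)]

end Diagrams

section Boundary

variable {lam mu : YoungDiagram} {p : ℕ × ℕ} {r r' k : ℕ}

def colTops (lam mu : YoungDiagram) : Finset (ℕ × ℕ) :=
  (skewCells lam mu).filter fun p => p.1 = mu.colLen p.2

def rowEnds (lam mu : YoungDiagram) : Finset (ℕ × ℕ) :=
  (skewCells lam mu).filter fun p => p.2 + 1 = lam.rowLen p.1

def nonemptyRows (lam mu : YoungDiagram) : Finset ℕ := (skewCells lam mu).image Prod.fst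

def numRows (lam mu : YoungDiagram) : ℕ := (nonemptyRows lam mu).card

def rowRank (lam mu : YoungDiagram) (r : ℕ) : ℕ := ((nonemptyRows lam mu).filter (· < r)).card

lemma fst_mem_nonemptyRows (hp : p ∈ skewCells lam mu) : p.1 ∈ nonemptyRows lam mu :=
  Finset.mem_image_of_mem _ hp

lemma rowEnd_mem_rowEnds (hr : r ∈ nonemptyRows lam mu) :
    (r, lam.rowLen r - 1) ∈ rowEnds lam mu := by
  obtain ⟨p, hp, rfl⟩ := Finset.mem_image.mp hr
  have := mem_skewCells_iff_rowLen.mp hp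
  refine Finset.mem_filter.mpr ⟨mem_skewCells_iff_rowLen.mpr ?_, ?_⟩ <;> dsimp only <;> omega

lemma rowRank_lt_rowRank (hr : r ∈ nonemptyRows lam mu) (h : r < r') :
    rowRank lam mu r < rowRank lam mu r' :=
  Finset.card_lt_card <| Finset.ssubset_iff_of_subset
    (Finset.monotone_filter_right _ fun _ _ hx => hx.trans h) |>.mpr
    ⟨r, Finset.mem_filter.mpr ⟨hr, h⟩, fun hr' => (Finset.mem_filter.mp hr').2.false⟩

lemma rowRank_injOn : Set.InjOn (rowRank lam mu) (nonemptyRows lam mu) := fun r hr r' hr' h => by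
  by_contra hne
  rcases Nat.lt_or_gt_of_ne hne with hlt | hlt
  · exact (rowRank_lt_rowRank hr hlt).ne h
  · exact (rowRank_lt_rowRank hr' hlt).ne h.symm

lemma rowRank_lt_numRows (hr : r ∈ nonemptyRows lam mu) : rowRank lam mu r < numRows lam mu :=
  Finset.card_lt_card <| Finset.ssubset_iff_of_subset (Finset.filter_subset _ _) |>.mpr
    ⟨r, hr, fun hr' => (Finset.mem_filter.mp hr').2.false⟩

lemma exists_rowRank_eq (hk : k < numRows lam mu) :
    ∃ r ∈ nonemptyRows lam mu, rowRank lam mu r = k := by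
  have hsurj := Finset.surjOn_of_injOn_of_card_le (t := Finset.range (numRows lam mu))
    (rowRank lam mu) (fun r hr => Finset.mem_range.mpr (rowRank_lt_numRows hr)) rowRank_injOn
    (by rw [Finset.card_range]; rfl)
  exact hsurj (Finset.mem_range.mpr hk)

lemma nonemptyRows_subset {lam' : YoungDiagram} (h : lam' ≤ lam) :
    nonemptyRows lam' mu ⊆ nonemptyRows lam mu :=
  Finset.image_subset_image (skewCells_mono h)

lemma rowRank_le_of_le {lam' : YoungDiagram} (h : lam' ≤ lam) (r : ℕ) :
    rowRank lam' mu r ≤ rowRank lam mu r :=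
  Finset.card_le_card (Finset.filter_subset_filter _ (nonemptyRows_subset h))

lemma numRows_le_of_le {lam' : YoungDiagram} (h : lam' ≤ lam) :
    numRows lam' mu ≤ numRows lam mu :=
  Finset.card_le_card (nonemptyRows_subset h)

lemma card_colTops_le_of_le {lam' : YoungDiagram} (h : lam' ≤ lam) :
    (colTops lam' mu).card ≤ (colTops lam mu).card :=
  Finset.card_le_card (Finset.filter_subset_filter _ (skewCells_mono h))

end Boundary

section Tableaux

variable {lam mu nu alp bet : YoungDiagram} {T : ℕ × ℕ → ℕ} {p q : ℕ × ℕ} {k : ℕ}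

lemma IsSSYT.pos (hT : IsSSYT lam mu T) (hp : p ∈ skewCells lam mu) : 0 < T p :=
  Nat.pos_of_ne_zero ((hT.1 p).mp hp)

lemma IsSSYT.eq_zero (hT : IsSSYT lam mu T) (hp : p ∉ skewCells lam mu) : T p = 0 :=
  not_not.mp fun h => hp ((hT.1 p).mpr h)

lemma IsSSYT.le_of_fst_eq (hT : IsSSYT lam mu T) (hp : p ∈ skewCells lam mu)
    (hq : q ∈ skewCells lam mu) (h1 : p.1 = q.1) (h2 : p.2 ≤ q.2) : T p ≤ T q := by
  obtain ⟨i, j⟩ := p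
  obtain ⟨i', j'⟩ := q
  obtain rfl : i = i' := h1
  exact hT.2.1 i j j' hp hq h2

lemma IsSSYT.lt_of_snd_eq (hT : IsSSYT lam mu T) (hp : p ∈ skewCells lam mu)
    (hq : q ∈ skewCells lam mu) (h1 : p.1 < q.1) (h2 : p.2 = q.2) : T p < T q := by
  obtain ⟨i, j⟩ := p
  obtain ⟨i', j'⟩ := q
  obtain rfl : j = j' := h2
  exact hT.2.2 i i' j hp hq h1

lemma IsSSYT.mem_colTops_of_eq_one (hT : IsSSYT lam mu T) (hp : p ∈ skewCells lam mu)
    (h : T p = 1) : p ∈ colTops lam mu := by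
  refine Finset.mem_filter.mpr ⟨hp, le_antisymm (not_lt.mp fun hlt => ?_)
    (mem_skewCells_iff_colLen.mp hp).1⟩
  have hq : (p.1 - 1, p.2) ∈ skewCells lam mu := by
    have := mem_skewCells_iff_colLen.mp hp
    exact mem_skewCells_iff_colLen.mpr ⟨by dsimp only; omega, by dsimp only; omega⟩
  have := hT.lt_of_snd_eq hq hp (by dsimp only; omega) rfl
  have := hT.pos hq
  omega

/-- The lattice condition provides an entry `k + 1` read earlier; it cannot lie in the same row,
where it would sit to the right. -/
lemma IsLR.exists_fst_lt (hT : IsLR lam mu nu T) (hp : p ∈ skewCells lam mu)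
    (h : T p = k + 2) : ∃ q ∈ skewCells lam mu, q.1 < p.1 ∧ T q = k + 1 := by
  have hpos : 0 < prefixCount lam mu T p.1 p.2 (k + 2) :=
    Finset.card_pos.mpr ⟨p, Finset.mem_filter.mpr ⟨hp, Or.inr ⟨rfl, le_rfl⟩, h⟩⟩
  obtain ⟨q, hq⟩ := Finset.card_pos.mp (hpos.trans_le (hT.2.1 p.1 p.2 k))
  obtain ⟨hqS, hqp | ⟨heq, hle⟩, hqT⟩ := Finset.mem_filter.mp hq
  · exact ⟨q, hqS, hqp, hqT⟩
  · have := hT.1.le_of_fst_eq hp hqS heq.symm hle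
    omega

lemma IsLR.exists_rowRank_add_le (hT : IsLR lam mu nu T) (s : ℕ) (hp : p ∈ skewCells lam mu)
    (h : T p = k + 1 + s) :
    ∃ q ∈ skewCells lam mu, T q = k + 1 ∧ rowRank lam mu q.1 + s ≤ rowRank lam mu p.1 := by
  induction s generalizing p with
  | zero => exact ⟨p, hp, h, le_rfl⟩
  | succ s ih =>
    obtain ⟨q', hq', hlt, hq'T⟩ := hT.exists_fst_lt hp (k := k + s) (by omega)
    obtain ⟨q, hq, hqT, hrank⟩ := ih hq' (by omega)
    have := rowRank_lt_rowRank (fst_mem_nonemptyRows hq') hlt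
    exact ⟨q, hq, hqT, by omega⟩

lemma IsLR.le_rowRank_add_one (hT : IsLR lam mu nu T) (hp : p ∈ skewCells lam mu) :
    T p ≤ rowRank lam mu p.1 + 1 := by
  have := hT.1.pos hp
  obtain ⟨q, -, -, hrank⟩ := hT.exists_rowRank_add_le (k := 0) (T p - 1) hp (by omega)
  omega

lemma IsLR.le_numRows (hT : IsLR lam mu nu T) (hp : p ∈ skewCells lam mu) :
    T p ≤ numRows lam mu :=
  (hT.le_rowRank_add_one hp).trans (rowRank_lt_numRows (fst_mem_nonemptyRows hp))

lemma IsLR.rowLen_eq_zero (hT : IsLR lam mu nu T) (hk : numRows lam mu ≤ k) :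
    nu.rowLen k = 0 := by
  rw [← hT.2.2 k]
  refine Finset.card_eq_zero.mpr (Finset.filter_eq_empty_iff.mpr fun p hp hpT => ?_)
  have := hT.le_numRows hp
  omega

lemma IsLR.rowLen_zero_le (hT : IsLR lam mu nu T) : nu.rowLen 0 ≤ (colTops lam mu).card := by
  rw [← hT.2.2 0]
  exact Finset.card_le_card fun p hp =>
    hT.1.mem_colTops_of_eq_one (Finset.mem_filter.mp hp).1 (Finset.mem_filter.mp hp).2

/-- Walking up from an entry `numRows lam mu` puts each entry `t` into a row of rank at most
`t - 1`, and the entry bound puts it into a row of rank at least `t - 1`. -/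
lemma IsLR.eq_rowRank_of_mem_rowEnds (hT : IsLR lam mu nu T)
    (hR : ∃ z ∈ skewCells lam mu, T z = numRows lam mu) (hp : p ∈ rowEnds lam mu) :
    T p = rowRank lam mu p.1 + 1 := by
  obtain ⟨hpS, hpend⟩ := Finset.mem_filter.mp hp
  obtain ⟨z, hz, hzT⟩ := hR
  have hg := rowRank_lt_numRows (fst_mem_nonemptyRows hpS)
  have hz' := rowRank_lt_numRows (fst_mem_nonemptyRows hz)
  obtain ⟨q, hq, hqT, hrank⟩ := hT.exists_rowRank_add_le
    (numRows lam mu - rowRank lam mu p.1 - 1) hz (k := rowRank lam mu p.1) (by omega)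
  have := hT.le_rowRank_add_one hq
  have hrow : q.1 = p.1 := rowRank_injOn (fst_mem_nonemptyRows hq) (fst_mem_nonemptyRows hpS)
    (by omega)
  have := hT.1.le_of_fst_eq hq hpS hrow
    (by have := (mem_skewCells_iff_rowLen.mp hq).2; rw [hrow] at this; omega)
  have := hT.le_rowRank_add_one hpS
  omega

lemma finite_setOf_isLR : {T | IsLR lam mu nu T}.Finite := by
  let restrict (T : ℕ × ℕ → ℕ) : skewCells lam mu → ℕ := fun q => T q
  have hbounded : {f : skewCells lam mu → ℕ | ∀ q, f q ∈ Set.Iic (numRows lam mu)}.Finite :=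
    Set.Finite.pi' fun _ => Set.finite_Iic _
  refine Set.Finite.of_finite_image (f := restrict) (hbounded.subset ?_)
    fun T hT T' hT' h => funext fun p => ?_
  · rintro _ ⟨T, hT, rfl⟩ q
    exact hT.le_numRows q.2
  · by_cases hp : p ∈ skewCells lam mu
    · exact congrFun h ⟨p, hp⟩
    · rw [hT.1.eq_zero hp, hT'.1.eq_zero hp]

lemma lrCoeff_pos (hmu : mu ≤ lam) (hT : IsLR lam mu nu T) : 0 < lrCoeff lam mu nu := by
  rw [lrCoeff, if_pos hmu]
  exact (Set.ncard_pos finite_setOf_isLR).mpr ⟨T, hT⟩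

lemma exists_isLR_of_lrCoeff_pos (h : 0 < lrCoeff lam mu nu) : ∃ T, IsLR lam mu nu T := by
  unfold lrCoeff at h
  split_ifs at h
  · exact Set.nonempty_of_ncard_ne_zero h.ne'
  · exact absurd h (lt_irrefl 0)

lemma lrCoeff_eq_of_invOn {lam' mu' nu' : YoungDiagram} (hmu : mu ≤ lam) (hmu' : mu' ≤ lam')
    (φ ψ : (ℕ × ℕ → ℕ) → ℕ × ℕ → ℕ)
    (hφ : ∀ T, IsLR lam mu nu T → IsLR lam' mu' nu' (φ T))
    (hψ : ∀ T, IsLR lam' mu' nu' T → IsLR lam mu nu (ψ T))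
    (hψφ : ∀ T, IsLR lam mu nu T → ψ (φ T) = T)
    (hφψ : ∀ T, IsLR lam' mu' nu' T → φ (ψ T) = T) :
    lrCoeff lam mu nu = lrCoeff lam' mu' nu' := by
  rw [lrCoeff, if_pos hmu, lrCoeff, if_pos hmu']
  exact Set.BijOn.ncard_eq (Set.InvOn.bijOn ⟨hψφ, hφψ⟩ hφ hψ)

lemma lrCoeff_eq_zero_of_forall_not_isLR (h : ∀ T, ¬ IsLR lam mu nu T) : lrCoeff lam mu nu = 0 :=
  Nat.eq_zero_of_not_pos fun hpos => (exists_isLR_of_lrCoeff_pos hpos).elim h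

lemma SchurEq.symm (h : SchurEq lam mu alp bet) :
    SchurEq alp bet lam mu := fun nu => (h nu).symm

end Tableaux

section ColumnFilling

variable {lam mu alp bet : YoungDiagram} {T : ℕ × ℕ → ℕ} {k : ℕ}

lemma prefixCount_le_of_above
    (h : ∀ p ∈ skewCells lam mu, T p = k + 2 →
      (p.1 - 1, p.2) ∈ skewCells lam mu ∧ T (p.1 - 1, p.2) = k + 1) (i j : ℕ) :
    prefixCount lam mu T i j (k + 2) ≤ prefixCount lam mu T i j (k + 1) := by
  have hne : ∀ p ∈ skewCells lam mu, T p = k + 2 → p.1 ≠ 0 := fun p hp hpT h0 => by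
    have := (h p hp hpT).2
    rw [show (p.1 - 1, p.2) = p from Prod.ext (by omega) rfl] at this
    omega
  refine Finset.card_le_card_of_injOn (fun p => (p.1 - 1, p.2)) (fun p hp => ?_)
    fun p hp q hq hpq => ?_
  · obtain ⟨hpS, hpre, hpT⟩ := Finset.mem_filter.mp hp
    have := hne p hpS hpT
    exact Finset.mem_filter.mpr ⟨(h p hpS hpT).1, Or.inl (by dsimp only; omega), (h p hpS hpT).2⟩
  · obtain ⟨hpS, -, hpT⟩ := Finset.mem_filter.mp hp
    obtain ⟨hqS, -, hqT⟩ := Finset.mem_filter.mp hq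
    have := hne p hpS hpT
    have := hne q hqS hqT
    simp only [Prod.mk.injEq] at hpq
    exact Prod.ext (by omega) hpq.2

def colFilling (lam mu : YoungDiagram) (p : ℕ × ℕ) : ℕ :=
  if p ∈ skewCells lam mu then p.1 + 1 - mu.colLen p.2 else 0

def colLevel (lam mu : YoungDiagram) (k : ℕ) : ℕ :=
  ((skewCells lam mu).filter fun p => p.1 = mu.colLen p.2 + k).card

lemma colLevel_antitone : Antitone (colLevel lam mu) := by
  refine antitone_nat_of_succ_le fun k => Finset.card_le_card_of_injOn (fun p => (p.1 - 1, p.2))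
    (fun p hp => ?_) fun p hp q hq hpq => ?_
  · obtain ⟨hpS, hpk⟩ := Finset.mem_filter.mp hp
    have := mem_skewCells_iff_colLen.mp hpS
    refine Finset.mem_filter.mpr ⟨mem_skewCells_iff_colLen.mpr ?_, ?_⟩ <;> dsimp only <;> omega
  · have := (Finset.mem_filter.mp hp).2
    have := (Finset.mem_filter.mp hq).2
    simp only [Prod.mk.injEq] at hpq
    exact Prod.ext (by omega) hpq.2

def colFillingShape (lam mu : YoungDiagram) : YoungDiagram :=
  ofRowLen (colLevel lam mu) colLevel_antitone (lam.colLen 0)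

lemma rowLen_colFillingShape (k : ℕ) : (colFillingShape lam mu).rowLen k = colLevel lam mu k := by
  refine rowLen_ofRowLen _ (fun k hk => Finset.card_eq_zero.mpr
    (Finset.filter_eq_empty_iff.mpr fun p hp hpk => ?_)) k
  have := (mem_skewCells_iff_colLen.mp hp).2
  have := lam.colLen_anti 0 p.2 (Nat.zero_le _)
  omega

lemma colLevel_zero : colLevel lam mu 0 = (colTops lam mu).card := rfl

lemma colFilling_isLR : IsLR lam mu (colFillingShape lam mu) (colFilling lam mu) := by
  have hval : ∀ p ∈ skewCells lam mu, colFilling lam mu p = p.1 + 1 - mu.colLen p.2 :=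
    fun p hp => if_pos hp
  have hcol := fun p (hp : p ∈ skewCells lam mu) => mem_skewCells_iff_colLen.mp hp
  refine ⟨⟨fun p => ⟨fun hp => ?_, fun hp => ?_⟩, fun i j1 j2 h1 h2 hj => ?_,
    fun i1 i2 j h1 h2 hi => ?_⟩, fun i j k => prefixCount_le_of_above (fun p hp hpk => ?_) i j,
    fun k => ?_⟩
  · have := hcol p hp
    rw [hval p hp]
    omega
  · by_contra hp'
    exact hp (if_neg hp')
  · have := mu.colLen_anti j1 j2 hj
    have := hcol _ h1
    rw [hval _ h1, hval _ h2]
    dsimp only at *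
    omega
  · have := hcol _ h1
    rw [hval _ h1, hval _ h2]
    dsimp only at *
    omega
  · have := hcol p hp
    rw [hval p hp] at hpk
    have habove : (p.1 - 1, p.2) ∈ skewCells lam mu :=
      mem_skewCells_iff_colLen.mpr ⟨by dsimp only; omega, by dsimp only; omega⟩
    refine ⟨habove, ?_⟩
    rw [hval _ habove]
    dsimp only
    omega
  · rw [rowLen_colFillingShape, content, colLevel]
    refine congrArg Finset.card (Finset.filter_congr fun p hp => ?_)
    have := hcol p hp
    rw [hval p hp]
    omega

lemma SchurEq.card_colTops_le (h : SchurEq lam mu alp bet)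
    (hmu : mu ≤ lam) : (colTops lam mu).card ≤ (colTops alp bet).card := by
  obtain ⟨T, hT⟩ := exists_isLR_of_lrCoeff_pos ((h _).symm ▸ lrCoeff_pos hmu colFilling_isLR)
  simpa [rowLen_colFillingShape, colLevel_zero] using hT.rowLen_zero_le

end ColumnFilling

section ColumnStep

variable {lam mu nu alp bet : YoungDiagram} {T : ℕ × ℕ → ℕ} {p q : ℕ × ℕ} {C : ℕ}

/-- The partition `(C, nu₀, nu₁, …)`; the first part is `max C nu₀` to keep it a partition. -/
def consRow (C : ℕ) (nu : YoungDiagram) : YoungDiagram :=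
  ofRowLen (fun k => if k = 0 then max C (nu.rowLen 0) else nu.rowLen (k - 1))
    (antitone_nat_of_succ_le fun k => by
      rcases k with _ | k
      · simp
      · simpa using nu.rowLen_anti k (k + 1) k.le_succ)
    (nu.colLen 0 + 1)

lemma rowLen_consRow (k : ℕ) : (consRow C nu).rowLen k =
    if k = 0 then max C (nu.rowLen 0) else nu.rowLen (k - 1) :=
  rowLen_ofRowLen _ (fun k hk => by
    rw [if_neg (by omega), rowLen_eq_zero_of_colLen_le (by omega)]) k

lemma mem_skewCells_shortenCols_one :
    q ∈ skewCells (shortenCols 1 lam) mu ↔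
      (q.1 + 1, q.2) ∈ skewCells lam mu ∧ q.1 + 1 ≠ mu.colLen q.2 := by
  rw [mem_skewCells_iff_colLen, mem_skewCells_iff_colLen, colLen_shortenCols]
  dsimp only
  omega

lemma mem_skewCells_shortenCols_one_of_ne (hp : p ∈ skewCells lam mu) (h : p.1 ≠ mu.colLen p.2) :
    (p.1 - 1, p.2) ∈ skewCells (shortenCols 1 lam) mu ∧ p.1 - 1 + 1 = p.1 := by
  have := mem_skewCells_iff_colLen.mp hp
  rw [mem_skewCells_shortenCols_one]
  exact ⟨⟨by rwa [show p.1 - 1 + 1 = p.1 by omega], by dsimp only; omega⟩, by omega⟩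

def insertColTops (lam mu : YoungDiagram) (T : ℕ × ℕ → ℕ) (p : ℕ × ℕ) : ℕ :=
  if p ∈ skewCells lam mu then (if p.1 = mu.colLen p.2 then 1 else T (p.1 - 1, p.2) + 1) else 0

def removeColTops (lam mu : YoungDiagram) (T : ℕ × ℕ → ℕ) (q : ℕ × ℕ) : ℕ :=
  if q ∈ skewCells (shortenCols 1 lam) mu then T (q.1 + 1, q.2) - 1 else 0

lemma insertColTops_of_eq (hp : p ∈ skewCells lam mu) (h : p.1 = mu.colLen p.2) :
    insertColTops lam mu T p = 1 := by
  rw [insertColTops, if_pos hp, if_pos h]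

lemma insertColTops_of_ne (hp : p ∈ skewCells lam mu) (h : p.1 ≠ mu.colLen p.2) :
    insertColTops lam mu T p = T (p.1 - 1, p.2) + 1 := by
  rw [insertColTops, if_pos hp, if_neg h]

lemma insertColTops_add_one (hq : q ∈ skewCells (shortenCols 1 lam) mu) :
    insertColTops lam mu T (q.1 + 1, q.2) = T q + 1 := by
  obtain ⟨hqS, hq'⟩ := mem_skewCells_shortenCols_one.mp hq
  rw [insertColTops_of_ne hqS hq']
  rfl

/-- Moving every cell one row down preserves the reading order. -/
lemma card_filter_insertColTops (P : ℕ × ℕ → Prop) [DecidablePred P] (m : ℕ) :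
    ((skewCells lam mu).filter fun p => P p ∧ insertColTops lam mu T p = m + 2).card =
      ((skewCells (shortenCols 1 lam) mu).filter fun q =>
        P (q.1 + 1, q.2) ∧ T q = m + 1).card := by
  have below : ∀ p ∈ skewCells lam mu, insertColTops lam mu T p = m + 2 →
      (p.1 - 1, p.2) ∈ skewCells (shortenCols 1 lam) mu ∧ p.1 - 1 + 1 = p.1 ∧
        T (p.1 - 1, p.2) = m + 1 := fun p hp hpT => by
    have hne : p.1 ≠ mu.colLen p.2 := fun h => by rw [insertColTops_of_eq hp h] at hpT; omega
    rw [insertColTops_of_ne hp hne] at hpT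
    exact ⟨(mem_skewCells_shortenCols_one_of_ne hp hne).1,
      (mem_skewCells_shortenCols_one_of_ne hp hne).2, by omega⟩
  refine Finset.card_nbij' (fun p => (p.1 - 1, p.2)) (fun q => (q.1 + 1, q.2)) (fun p hp => ?_)
    (fun q hq => ?_) (fun p hp => ?_) fun q _ => rfl
  · obtain ⟨hpS, hP, hpT⟩ := Finset.mem_filter.mp hp
    obtain ⟨hq, hrow, hqT⟩ := below p hpS hpT
    exact Finset.mem_filter.mpr ⟨hq, by rwa [hrow], hqT⟩
  · obtain ⟨hqS, hP, hqT⟩ := Finset.mem_filter.mp hq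
    exact Finset.mem_filter.mpr ⟨(mem_skewCells_shortenCols_one.mp hqS).1, hP,
      by rw [insertColTops_add_one hqS, hqT]⟩
  · obtain ⟨hpS, -, hpT⟩ := Finset.mem_filter.mp hp
    exact Prod.ext (below p hpS hpT).2.1 rfl

lemma prefixCount_insertColTops_succ (i j m : ℕ) :
    prefixCount lam mu (insertColTops lam mu T) (i + 1) j (m + 2) =
      prefixCount (shortenCols 1 lam) mu T i j (m + 1) := by
  rw [prefixCount, prefixCount,
    card_filter_insertColTops (fun p => p.1 < i + 1 ∨ p.1 = i + 1 ∧ j ≤ p.2)]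
  congr 1
  exact Finset.filter_congr fun q _ => by dsimp only; omega

lemma prefixCount_insertColTops_zero (j m : ℕ) :
    prefixCount lam mu (insertColTops lam mu T) 0 j (m + 2) = 0 := by
  rw [prefixCount, card_filter_insertColTops (fun p => p.1 < 0 ∨ p.1 = 0 ∧ j ≤ p.2)]
  simp

lemma content_insertColTops (m : ℕ) :
    content lam mu (insertColTops lam mu T) (m + 2) =
      content (shortenCols 1 lam) mu T (m + 1) := by
  simpa [content] using
    card_filter_insertColTops (lam := lam) (mu := mu) (T := T) (fun _ => True) m

lemma content_insertColTops_one (hT : ∀ q ∈ skewCells (shortenCols 1 lam) mu, T q ≠ 0) :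
    content lam mu (insertColTops lam mu T) 1 = (colTops lam mu).card := by
  refine congrArg Finset.card (Finset.filter_congr fun p hp => ?_)
  by_cases h : p.1 = mu.colLen p.2
  · simp [insertColTops_of_eq hp h, h]
  · simp [insertColTops_of_ne hp h, h, hT _ (mem_skewCells_shortenCols_one_of_ne hp h).1]

lemma isSSYT_insertColTops (hT : IsSSYT (shortenCols 1 lam) mu T) :
    IsSSYT lam mu (insertColTops lam mu T) := by
  have hpos : ∀ p ∈ skewCells lam mu, 0 < insertColTops lam mu T p := fun p hp => by
    by_cases h : p.1 = mu.colLen p.2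
    · rw [insertColTops_of_eq hp h]; exact one_pos
    · rw [insertColTops_of_ne hp h]; exact Nat.succ_pos _
  refine ⟨fun p => ⟨fun hp => (hpos p hp).ne', fun hp => by_contra fun hp' => hp (if_neg hp')⟩,
    fun i j1 j2 h1 h2 hj => ?_, fun i1 i2 j h1 h2 hi => ?_⟩
  · have := (mem_skewCells_iff_colLen.mp h1).1
    have := mu.colLen_anti j1 j2 hj
    by_cases htop : i = mu.colLen j1
    · rw [insertColTops_of_eq h1 htop]
      exact hpos _ h2
    · have hne : i ≠ mu.colLen j2 := by dsimp only at *; omega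
      rw [insertColTops_of_ne h1 htop, insertColTops_of_ne h2 hne]
      have := hT.2.1 _ _ _ (mem_skewCells_shortenCols_one_of_ne h1 htop).1
        (mem_skewCells_shortenCols_one_of_ne h2 hne).1 hj
      dsimp only at *
      omega
  · have := (mem_skewCells_iff_colLen.mp h1).1
    have hne : i2 ≠ mu.colLen j := by dsimp only at *; omega
    have hbelow := (mem_skewCells_shortenCols_one_of_ne h2 hne).1
    rw [insertColTops_of_ne h2 hne]
    by_cases htop : i1 = mu.colLen j
    · rw [insertColTops_of_eq h1 htop]
      have := hT.pos hbelow
      omega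
    · rw [insertColTops_of_ne h1 htop]
      have := hT.2.2 _ _ _ (mem_skewCells_shortenCols_one_of_ne h1 htop).1 hbelow
        (by dsimp only at *; omega)
      dsimp only at *
      omega

lemma isLattice_insertColTops (hT : IsLR (shortenCols 1 lam) mu nu T) :
    IsLattice lam mu (insertColTops lam mu T) := by
  intro i j k
  rcases k with _ | k
  · -- An entry `2` sits right below an entry `1` of `T`, which is a column top.
    refine prefixCount_le_of_above (fun p hp hpT => ?_) i j
    have hne : p.1 ≠ mu.colLen p.2 := fun h => by rw [insertColTops_of_eq hp h] at hpT; omega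
    obtain ⟨hq, hrow⟩ := mem_skewCells_shortenCols_one_of_ne hp hne
    rw [insertColTops_of_ne hp hne] at hpT
    have htop := (Finset.mem_filter.mp (hT.1.mem_colTops_of_eq_one hq (by omega))).2
    have hqS := skewCells_mono shortenCols_le hq
    exact ⟨hqS, insertColTops_of_eq hqS htop⟩
  · rcases i with _ | i
    · rw [prefixCount_insertColTops_zero]
      exact Nat.zero_le _
    · rw [prefixCount_insertColTops_succ, prefixCount_insertColTops_succ]
      exact hT.2.1 i j k

lemma isLR_insertColTops (hT : IsLR (shortenCols 1 lam) mu nu T)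
    (hnu : nu.rowLen 0 ≤ (colTops lam mu).card) :
    IsLR lam mu (consRow (colTops lam mu).card nu) (insertColTops lam mu T) := by
  refine ⟨isSSYT_insertColTops hT.1, isLattice_insertColTops hT, fun k => ?_⟩
  rcases k with _ | k
  · rw [content_insertColTops_one fun q hq => (hT.1.pos hq).ne', rowLen_consRow, if_pos rfl,
      max_eq_left hnu]
  · rw [content_insertColTops, rowLen_consRow, if_neg k.succ_ne_zero, hT.2.2 k]
    rfl

/-- The `1`s lie on column tops, and the content says there are as many of them as tops. -/
lemma IsLR.eq_one_iff (hT : IsLR lam mu (consRow (colTops lam mu).card nu) T)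
    (hnu : nu.rowLen 0 ≤ (colTops lam mu).card) (hp : p ∈ skewCells lam mu) :
    T p = 1 ↔ p.1 = mu.colLen p.2 := by
  have hones : (skewCells lam mu).filter (fun p => T p = 1) = colTops lam mu := by
    refine Finset.eq_of_subset_of_card_le (fun p hp => ?_) ?_
    · exact hT.1.mem_colTops_of_eq_one (Finset.mem_filter.mp hp).1 (Finset.mem_filter.mp hp).2
    · have := hT.2.2 0
      rw [rowLen_consRow, if_pos rfl, max_eq_left hnu] at this
      exact this.ge
  have := congrArg (p ∈ ·) hones
  simp only [colTops, Finset.mem_filter, hp, true_and, eq_iff_iff] at this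
  exact this

lemma insertColTops_removeColTops (hT : IsLR lam mu (consRow (colTops lam mu).card nu) T)
    (hnu : nu.rowLen 0 ≤ (colTops lam mu).card) :
    insertColTops lam mu (removeColTops lam mu T) = T := by
  funext p
  by_cases hp : p ∈ skewCells lam mu
  · by_cases htop : p.1 = mu.colLen p.2
    · rw [insertColTops_of_eq hp htop, (hT.eq_one_iff hnu hp).mpr htop]
    · obtain ⟨hq, hrow⟩ := mem_skewCells_shortenCols_one_of_ne hp htop
      have := hT.1.pos hp
      have := (hT.eq_one_iff hnu hp).not.mpr htop
      rw [insertColTops_of_ne hp htop, removeColTops, if_pos hq]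
      dsimp only
      rw [hrow, Prod.mk.eta]
      omega
  · rw [insertColTops, if_neg hp, hT.1.eq_zero hp]

lemma removeColTops_insertColTops (hT : IsSSYT (shortenCols 1 lam) mu T) :
    removeColTops lam mu (insertColTops lam mu T) = T := by
  funext q
  by_cases hq : q ∈ skewCells (shortenCols 1 lam) mu
  · rw [removeColTops, if_pos hq, insertColTops_add_one hq, Nat.add_sub_cancel]
  · rw [removeColTops, if_neg hq, hT.eq_zero hq]

lemma isLR_removeColTops (hT : IsLR lam mu (consRow (colTops lam mu).card nu) T)
    (hnu : nu.rowLen 0 ≤ (colTops lam mu).card) :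
    IsLR (shortenCols 1 lam) mu nu (removeColTops lam mu T) := by
  set T' := removeColTops lam mu T
  have hT' : insertColTops lam mu T' = T := insertColTops_removeColTops hT hnu
  have hval : ∀ q ∈ skewCells (shortenCols 1 lam) mu, T (q.1 + 1, q.2) = T' q + 1 :=
    fun q hq => by rw [← insertColTops_add_one (T := T') hq, hT']
  have hbelow := fun q (hq : q ∈ skewCells (shortenCols 1 lam) mu) =>
    (mem_skewCells_shortenCols_one.mp hq).1
  refine ⟨⟨fun q => ⟨fun hq => ?_, fun hq => by_contra fun hq' => hq (if_neg hq')⟩,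
    fun i j1 j2 h1 h2 hj => ?_, fun i1 i2 j h1 h2 hi => ?_⟩, fun i j k => ?_, fun k => ?_⟩
  · have := (hT.eq_one_iff hnu (hbelow q hq)).not.mpr (mem_skewCells_shortenCols_one.mp hq).2
    have := hT.1.pos (hbelow q hq)
    have := hval q hq
    omega
  · have := hT.1.2.1 (i + 1) j1 j2 (hbelow _ h1) (hbelow _ h2) hj
    have := hval _ h1
    have := hval _ h2
    dsimp only at *
    omega
  · have := hT.1.2.2 (i1 + 1) (i2 + 1) j (hbelow _ h1) (hbelow _ h2) (by omega)
    have := hval _ h1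
    have := hval _ h2
    dsimp only at *
    omega
  · rw [← prefixCount_insertColTops_succ, ← prefixCount_insertColTops_succ, hT']
    exact hT.2.1 (i + 1) j (k + 1)
  · have := hT.2.2 (k + 1)
    rw [rowLen_consRow, if_neg k.succ_ne_zero, ← hT', content_insertColTops] at this
    exact this

theorem lrCoeff_shortenCols_one (hmu : mu ≤ shortenCols 1 lam)
    (hnu : nu.rowLen 0 ≤ (colTops lam mu).card) :
    lrCoeff (shortenCols 1 lam) mu nu = lrCoeff lam mu (consRow (colTops lam mu).card nu) :=
  lrCoeff_eq_of_invOn hmu (hmu.trans shortenCols_le) (insertColTops lam mu)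
    (removeColTops lam mu) (fun _ hT => isLR_insertColTops hT hnu)
    (fun _ hT => isLR_removeColTops hT hnu) (fun _ hT => removeColTops_insertColTops hT.1)
    (fun _ hT => insertColTops_removeColTops hT hnu)

lemma lrCoeff_shortenCols_one_eq_zero (hnu : (colTops lam mu).card < nu.rowLen 0) :
    lrCoeff (shortenCols 1 lam) mu nu = 0 :=
  lrCoeff_eq_zero_of_forall_not_isLR fun _ hT => by
    have := hT.rowLen_zero_le
    have := card_colTops_le_of_le (mu := mu) (shortenCols_le (t := 1) (lam := lam))
    omega

lemma SchurEq.shortenCols_one (h : SchurEq lam mu alp bet)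
    (hmu : mu ≤ shortenCols 1 lam) (hbet : bet ≤ shortenCols 1 alp) :
    SchurEq (shortenCols 1 lam) mu (shortenCols 1 alp) bet := by
  have hC : (colTops lam mu).card = (colTops alp bet).card :=
    le_antisymm (h.card_colTops_le (hmu.trans shortenCols_le))
      (h.symm.card_colTops_le (hbet.trans shortenCols_le))
  intro nu
  by_cases hnu : nu.rowLen 0 ≤ (colTops lam mu).card
  · rw [lrCoeff_shortenCols_one hmu hnu, lrCoeff_shortenCols_one hbet (hC ▸ hnu), ← hC]
    exact h _
  · rw [lrCoeff_shortenCols_one_eq_zero (by omega), lrCoeff_shortenCols_one_eq_zero (by omega)]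

lemma SchurEq.shortenCols (h : SchurEq lam mu alp bet) (t : ℕ)
    (hmu : mu ≤ shortenCols t lam) (hbet : bet ≤ shortenCols t alp) :
    SchurEq (shortenCols t lam) mu (shortenCols t alp) bet := by
  induction t with
  | zero => simpa only [shortenCols_zero] using h
  | succ t ih =>
    rw [shortenCols_succ (t := t)] at hmu hbet ⊢
    rw [shortenCols_succ (t := t)]
    exact (ih (hmu.trans shortenCols_le) (hbet.trans shortenCols_le)).shortenCols_one hmu hbet

end ColumnStep

section RowStep

variable {lam mu nu alp bet : YoungDiagram} {T : ℕ × ℕ → ℕ} {p q z : ℕ × ℕ} {R i j k : ℕ}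

/-- The partition `nu + (1^R)`, cut off after `R` rows. -/
def addCol (R : ℕ) (nu : YoungDiagram) : YoungDiagram :=
  ofRowLen (fun k => if k < R then nu.rowLen k + 1 else 0)
    (antitone_nat_of_succ_le fun k => by
      have := nu.rowLen_anti k (k + 1) k.le_succ
      split_ifs <;> omega)
    R

lemma rowLen_addCol (k : ℕ) : (addCol R nu).rowLen k = if k < R then nu.rowLen k + 1 else 0 :=
  rowLen_ofRowLen _ (fun k hk => if_neg (by omega)) k

lemma mem_rowEnds : p ∈ rowEnds lam mu ↔ p ∈ skewCells lam mu ∧ p.2 + 1 = lam.rowLen p.1 :=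
  Finset.mem_filter

lemma mem_skewCells_shortenRows_one :
    p ∈ skewCells (shortenRows 1 lam) mu ↔ p ∈ skewCells lam mu ∧ p ∉ rowEnds lam mu := by
  rw [mem_rowEnds, mem_skewCells_iff_rowLen, mem_skewCells_iff_rowLen, rowLen_shortenRows]
  omega

lemma eq_of_mem_rowEnds (hp : p ∈ rowEnds lam mu) (hq : q ∈ rowEnds lam mu)
    (h : rowRank lam mu p.1 = rowRank lam mu q.1) : p = q := by
  rw [mem_rowEnds] at hp hq
  have h1 := rowRank_injOn (fst_mem_nonemptyRows hp.1) (fst_mem_nonemptyRows hq.1) h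
  exact Prod.ext h1 (by rw [h1] at hp; omega)

lemma card_rowEnds_filter_rowRank (k : ℕ) :
    ((rowEnds lam mu).filter fun p => rowRank lam mu p.1 = k).card =
      if k < numRows lam mu then 1 else 0 := by
  split_ifs with hk
  · obtain ⟨r, hr, rfl⟩ := exists_rowRank_eq hk
    refine Finset.card_eq_one.mpr ⟨_, Finset.eq_singleton_iff_unique_mem.mpr
      ⟨Finset.mem_filter.mpr ⟨rowEnd_mem_rowEnds hr, rfl⟩, fun p hp => ?_⟩⟩
    exact eq_of_mem_rowEnds (Finset.mem_filter.mp hp).1 (rowEnd_mem_rowEnds hr)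
      (Finset.mem_filter.mp hp).2
  · refine Finset.card_eq_zero.mpr (Finset.filter_eq_empty_iff.mpr fun p hp hpk => hk ?_)
    exact hpk ▸ rowRank_lt_numRows (fst_mem_nonemptyRows (mem_rowEnds.mp hp).1)

def insertRowEnds (lam mu : YoungDiagram) (T : ℕ × ℕ → ℕ) (p : ℕ × ℕ) : ℕ :=
  if p ∈ rowEnds lam mu then rowRank lam mu p.1 + 1 else T p

def removeRowEnds (lam mu : YoungDiagram) (T : ℕ × ℕ → ℕ) (p : ℕ × ℕ) : ℕ :=
  if p ∈ skewCells (shortenRows 1 lam) mu then T p else 0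

lemma insertRowEnds_of_mem (hp : p ∈ rowEnds lam mu) :
    insertRowEnds lam mu T p = rowRank lam mu p.1 + 1 :=
  if_pos hp

lemma card_filter_insertRowEnds (P : ℕ × ℕ → Prop) [DecidablePred P] (m : ℕ) :
    ((skewCells lam mu).filter fun p => P p ∧ insertRowEnds lam mu T p = m).card =
      ((skewCells (shortenRows 1 lam) mu).filter fun p => P p ∧ T p = m).card +
        ((rowEnds lam mu).filter fun p => P p ∧ rowRank lam mu p.1 + 1 = m).card := by
  rw [← Finset.card_filter_add_card_filter_not (fun p => p ∉ rowEnds lam mu)]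
  congr 2 <;> ext p <;>
    simp only [Finset.mem_filter, mem_skewCells_shortenRows_one, insertRowEnds, not_not,
      mem_rowEnds] <;> aesop

def rowEndsRead (lam mu : YoungDiagram) (i j m : ℕ) : ℕ :=
  ((rowEnds lam mu).filter fun p =>
    (p.1 < i ∨ p.1 = i ∧ j ≤ p.2) ∧ rowRank lam mu p.1 + 1 = m).card

lemma prefixCount_insertRowEnds (m : ℕ) :
    prefixCount lam mu (insertRowEnds lam mu T) i j m =
      prefixCount (shortenRows 1 lam) mu T i j m + rowEndsRead lam mu i j m :=
  card_filter_insertRowEnds (fun p => p.1 < i ∨ p.1 = i ∧ j ≤ p.2) m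

lemma content_insertRowEnds (k : ℕ) :
    content lam mu (insertRowEnds lam mu T) (k + 1) =
      content (shortenRows 1 lam) mu T (k + 1) + if k < numRows lam mu then 1 else 0 := by
  rw [← card_rowEnds_filter_rowRank]
  simpa [content] using card_filter_insertRowEnds (lam := lam) (mu := mu) (T := T)
    (fun _ => True) (k + 1)

lemma rowEndsRead_le_one (m : ℕ) : rowEndsRead lam mu i j m ≤ 1 :=
  Finset.card_le_one.mpr fun p hp q hq => by
    obtain ⟨hpE, -, hp⟩ := Finset.mem_filter.mp hp
    obtain ⟨hqE, -, hq⟩ := Finset.mem_filter.mp hq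
    exact eq_of_mem_rowEnds hpE hqE (by omega)

/-- A row end is read before every other cell of its row, so any cell read by `(i, j)` drags
along the ends of all rows of smaller or equal rank. -/
lemma one_le_rowEndsRead (hz : z ∈ skewCells lam mu) (hread : z.1 < i ∨ z.1 = i ∧ j ≤ z.2)
    (hk : k ≤ rowRank lam mu z.1) : 1 ≤ rowEndsRead lam mu i j (k + 1) := by
  obtain ⟨r, hr, rfl⟩ :=
    exists_rowRank_eq (hk.trans_lt (rowRank_lt_numRows (fst_mem_nonemptyRows hz)))
  have hrz : r ≤ z.1 := not_lt.mp fun h =>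
    (rowRank_lt_rowRank (fst_mem_nonemptyRows hz) h).not_ge hk
  have := (mem_skewCells_iff_rowLen.mp hz).2
  have := lam.rowLen_anti r z.1 hrz
  refine Finset.card_pos.mpr ⟨_, Finset.mem_filter.mpr ⟨rowEnd_mem_rowEnds hr, ?_, rfl⟩⟩
  dsimp only
  rcases hrz.lt_or_eq with hlt | rfl <;> omega

lemma rowEndsRead_succ_le : rowEndsRead lam mu i j (k + 2) ≤ rowEndsRead lam mu i j (k + 1) := by
  rcases Nat.eq_zero_or_pos (rowEndsRead lam mu i j (k + 2)) with h | h
  · omega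
  · obtain ⟨p, hp⟩ := Finset.card_pos.mp h
    obtain ⟨hpE, hread, hrank⟩ := Finset.mem_filter.mp hp
    have := one_le_rowEndsRead (mem_rowEnds.mp hpE).1 hread (k := k) (by omega)
    have := rowEndsRead_le_one (lam := lam) (mu := mu) (i := i) (j := j) (k + 2)
    omega

lemma insertRowEnds_le (hT : IsLR (shortenRows 1 lam) mu nu T) (hp : p ∈ skewCells lam mu) :
    insertRowEnds lam mu T p ≤ rowRank lam mu p.1 + 1 := by
  unfold insertRowEnds
  split_ifs with hend
  · exact le_rfl
  · exact (hT.le_rowRank_add_one (mem_skewCells_shortenRows_one.mpr ⟨hp, hend⟩)).trans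
      (Nat.succ_le_succ (rowRank_le_of_le shortenRows_le _))

lemma isSSYT_insertRowEnds (hT : IsLR (shortenRows 1 lam) mu nu T) :
    IsSSYT lam mu (insertRowEnds lam mu T) := by
  have hkept : ∀ p ∈ skewCells lam mu, p ∉ rowEnds lam mu →
      p ∈ skewCells (shortenRows 1 lam) mu ∧ insertRowEnds lam mu T p = T p :=
    fun p hp hend => ⟨mem_skewCells_shortenRows_one.mpr ⟨hp, hend⟩, if_neg hend⟩
  refine ⟨fun p => ⟨fun hp => ?_, fun hp => by_contra fun hpS => hp ?_⟩,
    fun i j1 j2 h1 h2 hj => ?_, fun i1 i2 j h1 h2 hi => ?_⟩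
  · by_cases hend : p ∈ rowEnds lam mu
    · rw [insertRowEnds_of_mem hend]
      exact Nat.succ_ne_zero _
    · rw [(hkept p hp hend).2]
      exact (hT.1.1 p).mp (hkept p hp hend).1
  · have hend : p ∉ rowEnds lam mu := fun h => hpS (mem_rowEnds.mp h).1
    rw [insertRowEnds, if_neg hend]
    exact hT.1.eq_zero fun h => hpS (skewCells_mono shortenRows_le h)
  · by_cases hend : (i, j2) ∈ rowEnds lam mu
    · rw [insertRowEnds_of_mem hend]
      exact insertRowEnds_le hT h1
    · have hend1 : (i, j1) ∉ rowEnds lam mu := fun h => by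
        have := (mem_rowEnds.mp h).2
        have := (mem_skewCells_iff_rowLen.mp h2).2
        exact hend (mem_rowEnds.mpr ⟨h2, by dsimp only at *; omega⟩)
      rw [(hkept _ h1 hend1).2, (hkept _ h2 hend).2]
      exact hT.1.2.1 i j1 j2 (hkept _ h1 hend1).1 (hkept _ h2 hend).1 hj
  · by_cases hend : (i2, j) ∈ rowEnds lam mu
    · rw [insertRowEnds_of_mem hend]
      have := insertRowEnds_le hT h1
      have := rowRank_lt_rowRank (fst_mem_nonemptyRows h1) hi
      dsimp only at *
      omega
    · have hend1 : (i1, j) ∉ rowEnds lam mu := fun h => by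
        have := (mem_rowEnds.mp h).2
        have := (mem_skewCells_iff_rowLen.mp h2).2
        have := lam.rowLen_anti i1 i2 hi.le
        exact hend (mem_rowEnds.mpr ⟨h2, by dsimp only at *; omega⟩)
      rw [(hkept _ h1 hend1).2, (hkept _ h2 hend).2]
      exact hT.1.2.2 i1 i2 j (hkept _ h1 hend1).1 (hkept _ h2 hend).1 hi

lemma isLR_insertRowEnds (hT : IsLR (shortenRows 1 lam) mu nu T)
    (hnu : nu.rowLen (numRows lam mu) = 0) :
    IsLR lam mu (addCol (numRows lam mu) nu) (insertRowEnds lam mu T) := by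
  refine ⟨isSSYT_insertRowEnds hT, fun i j k => ?_, fun k => ?_⟩
  · rw [prefixCount_insertRowEnds, prefixCount_insertRowEnds]
    exact Nat.add_le_add (hT.2.1 i j k) rowEndsRead_succ_le
  · rw [content_insertRowEnds, hT.2.2 k, rowLen_addCol]
    split_ifs with hk
    · rfl
    · have := nu.rowLen_anti (numRows lam mu) k (by omega)
      omega

lemma IsLR.insertRowEnds_removeRowEnds (hT : IsLR lam mu (addCol (numRows lam mu) nu) T) :
    insertRowEnds lam mu (removeRowEnds lam mu T) = T := by
  funext p
  by_cases hend : p ∈ rowEnds lam mu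
  · rw [insertRowEnds_of_mem hend]
    have hR := rowRank_lt_numRows (fst_mem_nonemptyRows (mem_rowEnds.mp hend).1)
    have hcontent := hT.2.2 (numRows lam mu - 1)
    rw [rowLen_addCol, if_pos (by omega), Nat.sub_add_cancel (by omega)] at hcontent
    obtain ⟨z, hz⟩ := Finset.card_pos.mp (by omega : 0 < content lam mu T (numRows lam mu))
    exact (hT.eq_rowRank_of_mem_rowEnds ⟨z, Finset.mem_filter.mp hz⟩ hend).symm
  · rw [insertRowEnds, if_neg hend, removeRowEnds]
    split_ifs with hp
    · rfl
    · exact (hT.1.eq_zero fun hpS => hp (mem_skewCells_shortenRows_one.mpr ⟨hpS, hend⟩)).symm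

lemma removeRowEnds_insertRowEnds (hT : IsSSYT (shortenRows 1 lam) mu T) :
    removeRowEnds lam mu (insertRowEnds lam mu T) = T := by
  funext p
  rw [removeRowEnds]
  split_ifs with hp
  · exact if_neg (mem_skewCells_shortenRows_one.mp hp).2
  · exact (hT.eq_zero hp).symm

lemma isLR_removeRowEnds (hT : IsLR lam mu (addCol (numRows lam mu) nu) T)
    (hnu : nu.rowLen (numRows lam mu) = 0) :
    IsLR (shortenRows 1 lam) mu nu (removeRowEnds lam mu T) := by
  set T' := removeRowEnds lam mu T
  have hT' : insertRowEnds lam mu T' = T := hT.insertRowEnds_removeRowEnds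
  have hsub := fun p (hp : p ∈ skewCells (shortenRows 1 lam) mu) =>
    (mem_skewCells_shortenRows_one.mp hp).1
  have hval : ∀ p ∈ skewCells (shortenRows 1 lam) mu, T' p = T p := fun p hp => if_pos hp
  refine ⟨⟨fun p => ⟨fun hp => ?_, fun hp => by_contra fun hp' => hp (if_neg hp')⟩,
    fun i j1 j2 h1 h2 hj => ?_, fun i1 i2 j h1 h2 hi => ?_⟩, fun i j k => ?_, fun k => ?_⟩
  · rw [hval p hp]
    exact (hT.1.1 p).mp (hsub p hp)
  · rw [hval _ h1, hval _ h2]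
    exact hT.1.2.1 i j1 j2 (hsub _ h1) (hsub _ h2) hj
  · rw [hval _ h1, hval _ h2]
    exact hT.1.2.2 i1 i2 j (hsub _ h1) (hsub _ h2) hi
  · -- An entry `k + 2` read by `(i, j)` lies in a row of rank `≥ k + 1`, so then the ends of
    -- the rows of rank `k` and `k + 1` are read as well.
    have hlat := hT.2.1 i j k
    rw [← hT', prefixCount_insertRowEnds, prefixCount_insertRowEnds] at hlat
    have := rowEndsRead_le_one (lam := lam) (mu := mu) (i := i) (j := j) (k + 1)
    rcases Nat.eq_zero_or_pos (prefixCount lam mu T i j (k + 2)) with h0 | hpos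
    · rw [← hT', prefixCount_insertRowEnds] at h0
      omega
    · obtain ⟨z, hz⟩ := Finset.card_pos.mp hpos
      obtain ⟨hzS, hread, hzT⟩ := Finset.mem_filter.mp hz
      have := hT.le_rowRank_add_one hzS
      have : 1 ≤ rowEndsRead lam mu i j (k + 2) := one_le_rowEndsRead hzS hread (by omega)
      omega
  · have hcontent := hT.2.2 k
    rw [← hT', content_insertRowEnds, rowLen_addCol] at hcontent
    split_ifs at hcontent with hk
    · omega
    · have := nu.rowLen_anti (numRows lam mu) k (by omega)
      omega

theorem lrCoeff_shortenRows_one (hmu : mu ≤ shortenRows 1 lam)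
    (hnu : nu.rowLen (numRows lam mu) = 0) :
    lrCoeff (shortenRows 1 lam) mu nu = lrCoeff lam mu (addCol (numRows lam mu) nu) :=
  lrCoeff_eq_of_invOn hmu (hmu.trans shortenRows_le) (insertRowEnds lam mu)
    (removeRowEnds lam mu) (fun _ hT => isLR_insertRowEnds hT hnu)
    (fun _ hT => isLR_removeRowEnds hT hnu) (fun _ hT => removeRowEnds_insertRowEnds hT.1)
    (fun _ hT => hT.insertRowEnds_removeRowEnds)

lemma lrCoeff_shortenRows_one_eq_zero (hnu : nu.rowLen (numRows lam mu) ≠ 0) :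
    lrCoeff (shortenRows 1 lam) mu nu = 0 :=
  lrCoeff_eq_zero_of_forall_not_isLR fun _ hT =>
    hnu (hT.rowLen_eq_zero (numRows_le_of_le shortenRows_le))

/-- The witness is the column filling of `(shortenRows 1 lam)/mu` with a column added to its
content. -/
lemma SchurEq.numRows_le (h : SchurEq lam mu alp bet)
    (hmu : mu ≤ shortenRows 1 lam) : numRows lam mu ≤ numRows alp bet := by
  have hnu := colFilling_isLR.rowLen_eq_zero
    (numRows_le_of_le (mu := mu) (shortenRows_le (t := 1) (lam := lam)))
  have hpos := (lrCoeff_shortenRows_one hmu hnu).symm ▸ lrCoeff_pos hmu colFilling_isLR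
  obtain ⟨T, hT⟩ := exists_isLR_of_lrCoeff_pos ((h _) ▸ hpos)
  by_contra hlt
  have := hT.rowLen_eq_zero (k := numRows lam mu - 1) (by omega)
  rw [rowLen_addCol, if_pos (by omega)] at this
  omega

lemma SchurEq.shortenRows_one (h : SchurEq lam mu alp bet)
    (hmu : mu ≤ shortenRows 1 lam) (hbet : bet ≤ shortenRows 1 alp) :
    SchurEq (shortenRows 1 lam) mu (shortenRows 1 alp) bet := by
  have hR : numRows lam mu = numRows alp bet :=
    le_antisymm (h.numRows_le hmu) (h.symm.numRows_le hbet)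
  intro nu
  by_cases hnu : nu.rowLen (numRows lam mu) = 0
  · rw [lrCoeff_shortenRows_one hmu hnu, lrCoeff_shortenRows_one hbet (hR ▸ hnu), ← hR]
    exact h _
  · rw [lrCoeff_shortenRows_one_eq_zero hnu, lrCoeff_shortenRows_one_eq_zero (hR ▸ hnu)]

lemma SchurEq.shortenRows (h : SchurEq lam mu alp bet) (t : ℕ)
    (hmu : mu ≤ shortenRows t lam) (hbet : bet ≤ shortenRows t alp) :
    SchurEq (shortenRows t lam) mu (shortenRows t alp) bet := by
  induction t with
  | zero => simpa only [shortenRows_zero] using h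
  | succ t ih =>
    rw [shortenRows_succ (t := t)] at hmu hbet ⊢
    rw [shortenRows_succ (t := t)]
    exact (ih (hmu.trans shortenRows_le) (hbet.trans shortenRows_le)).shortenRows_one hmu hbet

end RowStep

theorem schurEq_remove_boxes_general (lam mu alp bet : YoungDiagram)
    (h : SchurEq lam mu alp bet) (i : ℕ)
    (lamHat alpHat : YoungDiagram)
    (hlamHat : ∀ j, lamHat.colLen j = lam.colLen j - i)
    (halpHat : ∀ j, alpHat.colLen j = alp.colLen j - i)
    (hmuHat : mu ≤ lamHat) (hbetHat : bet ≤ alpHat)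
    (lamTil alpTil : YoungDiagram)
    (hlamTil : ∀ r, lamTil.rowLen r = lam.rowLen r - i)
    (halpTil : ∀ r, alpTil.rowLen r = alp.rowLen r - i)
    (hmuTil : mu ≤ lamTil) (hbetTil : bet ≤ alpTil) :
    SchurEq lamHat mu alpHat bet ∧ SchurEq lamTil mu alpTil bet := by
  obtain rfl := eq_shortenCols hlamHat
  obtain rfl := eq_shortenCols halpHat
  obtain rfl := eq_shortenRows hlamTil
  obtain rfl := eq_shortenRows halpTil
  exact ⟨h.shortenCols i hmuHat hbetHat, h.shortenRows i hmuTil hbetTil⟩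

/-- removing the top `i` boxes from every column (resp. the left `i` boxes from
every row) of two basic skew diagrams with equal skew Schur functions again yields skew
diagrams with equal skew Schur functions. -/
theorem schurEq_remove_boxes (lam mu alp bet : YoungDiagram)
    (hmu : mu ≤ lam) (hbet : bet ≤ alp)
    (hbasic1 : IsBasic lam mu) (hbasic2 : IsBasic alp bet)
    (h : SchurEq lam mu alp bet) (i : ℕ)
    (lamHat alpHat : YoungDiagram)
    (hlamHat : ∀ j, lamHat.colLen j = lam.colLen j - i)
    (halpHat : ∀ j, alpHat.colLen j = alp.colLen j - i)
    (hmuHat : mu ≤ lamHat) (hbetHat : bet ≤ alpHat)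
    (lamTil alpTil : YoungDiagram)
    (hlamTil : ∀ r, lamTil.rowLen r = lam.rowLen r - i)
    (halpTil : ∀ r, alpTil.rowLen r = alp.rowLen r - i)
    (hmuTil : mu ≤ lamTil) (hbetTil : bet ≤ alpTil) :
    SchurEq lamHat mu alpHat bet ∧ SchurEq lamTil mu alpTil bet :=
  schurEq_remove_boxes_general lam mu alp bet h i lamHat alpHat hlamHat halpHat hmuHat hbetHat
    lamTil alpTil hlamTil halpTil hmuTil hbetTil

end LRSkew
end
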